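/- Let L be a bounded lattice, X = D♭(L) = (MPH(L,2_B), E) and Y = D̄♭(L) = (SPH(L,2_B), E). Then for every φ ∈ MPE(X,2) the partial map Ψ(φ) belongs to MPE(Y,2), and the map Ψ : MPE(X,2) → MPE(Y,2) is an order-isomorphism between these complete lattices (each ordered by φ ≤ ψ iff φ⁻¹(1) ⊆ ψ⁻¹(1)); moreover Ψ(e_a) = ē_a for every a ∈ L. -/

import Mathlib

/-!
The order part of the argument works for any reflexive graph `(Y, E)` and a map
`ι : X → Y` that is interpolating: whenever `E f h`, some `ι g` has all its in-neighbours among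
those of `h` and all its out-neighbours among those of `f`. Then `Ψ(φ)` is always maximal,
`Ψ(φ)(ι g) = 1 ↔ φ(g) = 1` makes `Ψ` an order embedding, and `η ↦ η ∘ ι` inverts it.

For SPHs, `E f h` says that the filter `f⁻¹(1)` misses the ideal `h⁻¹(0)`, so interpolation
amounts to extending a disjoint filter–ideal pair to an MPH, which is Zorn's lemma applied to
such pairs. Finally `Ψ(e_a)` and `ē_a` are both maximal with the same `1`-set: if `f(a) ≠ 1`, an
MPH separating `f⁻¹(1)` from `↓a` witnesses `Ψ(e_a)(f) ≠ 1`.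
-/

namespace CanExt

open Classical

/-- A partial map from `X` into the two-element chain `{0,1}` (encoded as `Bool`,
with `false` playing the role of `0` and `true` the role of `1`);
`φ x = none` means `x` is outside the domain of `φ`. -/
abbrev PMap (X : Type*) := X → Option Bool

/-- The preimage of `1` of a partial map. -/
def pre1 {X : Type*} (φ : PMap X) : Set X := {x | φ x = some true}

/-- The preimage of `0` of a partial map. -/
def pre0 {X : Type*} (φ : PMap X) : Set X := {x | φ x = some false}

/-- A partial map is `E`-preserving if whenever `x, y` lie in its domain and
`(x,y) ∈ E`, then `φ x ≤ φ y`. -/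
def EPres {X : Type*} (E : X → X → Prop) (φ : PMap X) : Prop :=
  ∀ ⦃x y : X⦄, E x y → ∀ ⦃a b : Bool⦄, φ x = some a → φ y = some b → a ≤ b

/-- `PExt ψ φ` : the partial map `ψ` extends the partial map `φ`. -/
def PExt {X : Type*} (ψ φ : PMap X) : Prop :=
  ∀ ⦃x : X⦄ ⦃a : Bool⦄, φ x = some a → ψ x = some a

/-- The set of maximal partial `E`-preserving maps from `(X,E)` into the
two-element chain `2`. -/
def MPE {X : Type*} (E : X → X → Prop) : Set (PMap X) :=
  {φ | EPres E φ ∧ ∀ ψ : PMap X, EPres E ψ → PExt ψ φ → ψ = φ}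

/-- A partial morphism from a graph with topology `(X,E,t)` to `2_τ`:
the preimages of `1` and `0` are `t`-closed (equivalently, the domain is
closed and the restriction to the domain is continuous into discrete `2`),
and the map is `E`-preserving. -/
def PMorphT {X : Type*} (E : X → X → Prop) (t : TopologicalSpace X) (φ : PMap X) : Prop :=
  EPres E φ ∧ @IsClosed X t (pre1 φ) ∧ @IsClosed X t (pre0 φ)

/-- The set of maximal partial morphisms from `(X,E,t)` to `2_τ`. -/
def MPM {X : Type*} (E : X → X → Prop) (t : TopologicalSpace X) : Set (PMap X) :=
  {φ | PMorphT E t φ ∧ ∀ ψ : PMap X, PMorphT E t ψ → PExt ψ φ → ψ = φ}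

/-- The relation `E` between partial maps on a lattice `L`:
`(f,g) ∈ E` iff `f x ≤ g x` for all `x ∈ dom f ∩ dom g`. -/
def ErelP {L : Type*} (f g : PMap L) : Prop :=
  ∀ ⦃x : L⦄ ⦃a b : Bool⦄, f x = some a → g x = some b → a ≤ b

/-- `f ≤₁ g` iff `f⁻¹(1) ⊆ g⁻¹(1)`. -/
def le1 {L : Type*} (f g : PMap L) : Prop := pre1 f ⊆ pre1 g

/-- `f ≤₂ g` iff `f⁻¹(0) ⊆ g⁻¹(0)`. -/
def le2 {L : Type*} (f g : PMap L) : Prop := pre0 f ⊆ pre0 g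

section Lat

variable (L : Type*) [Lattice L] [BoundedOrder L]

/-- A partial homomorphism from a bounded lattice `L` to the two-element
bounded lattice `2_B`: its domain is a `{0,1}`-sublattice of `L` and the
restriction to the domain is a bounded-lattice homomorphism. -/
def PHom (f : PMap L) : Prop :=
  f ⊥ = some false ∧ f ⊤ = some true ∧
  ∀ ⦃a b : L⦄ ⦃x y : Bool⦄, f a = some x → f b = some y →
    f (a ⊓ b) = some (x ⊓ y) ∧ f (a ⊔ b) = some (x ⊔ y)

/-- The set of maximal partial homomorphisms (MPHs) from `L` to `2_B`. -/
def MPHset : Set (PMap L) := {f | PHom L f ∧ ∀ g : PMap L, PHom L g → PExt g f → g = f}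

/-- The underlying set of the graph `D♭(L)`. -/
abbrev MPHsub := {f : PMap L // f ∈ MPHset L}

/-- The relation `E` on `MPH(L, 2_B)`, giving the graph `D♭(L)`. -/
def EM (f g : MPHsub L) : Prop := ErelP f.1 g.1

/-- The evaluation map `e_a` on `MPH(L,2_B)` : `e_a(f) = f(a)` if `a ∈ dom f`. -/
def evalM (a : L) : PMap (MPHsub L) := fun f => f.1 a

/-- `V_a = {f ∈ MPH(L,2_B) : f(a) = 0}`. -/
def VaM (a : L) : Set (MPHsub L) := {f | f.1 a = some false}

/-- `W_a = {f ∈ MPH(L,2_B) : f(a) = 1}`. -/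
def WaM (a : L) : Set (MPHsub L) := {f | f.1 a = some true}

/-- The topology on `MPH(L,2_B)` with the sets `V_a`, `W_a` as a subbasis of
closed sets. -/
def tauM : TopologicalSpace (MPHsub L) :=
  TopologicalSpace.generateFrom {U | ∃ a : L, U = (VaM L a)ᶜ ∨ U = (WaM L a)ᶜ}

/-- A (nonempty) lattice filter. -/
def IsLatFilter (F : Set L) : Prop :=
  F.Nonempty ∧ (∀ ⦃a b : L⦄, a ∈ F → a ≤ b → b ∈ F) ∧
    (∀ ⦃a b : L⦄, a ∈ F → b ∈ F → a ⊓ b ∈ F)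

/-- A (nonempty) lattice ideal. -/
def IsLatIdeal (I : Set L) : Prop :=
  I.Nonempty ∧ (∀ ⦃a b : L⦄, a ∈ I → b ≤ a → b ∈ I) ∧
    (∀ ⦃a b : L⦄, a ∈ I → b ∈ I → a ⊔ b ∈ I)

/-- The set of special partial homomorphisms (SPHs) from `L` to `2_B`:
`f⁻¹(1)` is a nonempty filter, `f⁻¹(0)` is a nonempty ideal, and they are
disjoint. -/
def SPHset : Set (PMap L) :=
  {f | IsLatFilter L (pre1 f) ∧ IsLatIdeal L (pre0 f) ∧ Disjoint (pre1 f) (pre0 f)}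

/-- The underlying set of the graph `D̄♭(L)`. -/
abbrev SPHsub := {f : PMap L // f ∈ SPHset L}

/-- The relation `E` on `SPH(L, 2_B)`, giving the graph `D̄♭(L)`. -/
def ES (f g : SPHsub L) : Prop := ErelP f.1 g.1

/-- The evaluation map `ē_a` on `SPH(L,2_B)`. -/
def evalS (a : L) : PMap (SPHsub L) := fun f => f.1 a

/-- `V_a = {f ∈ SPH(L,2_B) : f(a) = 0}`. -/
def VaS (a : L) : Set (SPHsub L) := {f | f.1 a = some false}

/-- `W_a = {f ∈ SPH(L,2_B) : f(a) = 1}`. -/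
def WaS (a : L) : Set (SPHsub L) := {f | f.1 a = some true}

/-- The topology on `SPH(L,2_B)` with the sets `V_a`, `W_a` as a subbasis of
closed sets. -/
def tauS : TopologicalSpace (SPHsub L) :=
  TopologicalSpace.generateFrom {U | ∃ a : L, U = (VaS L a)ᶜ ∨ U = (WaS L a)ᶜ}

/-- The carrier of the completion built from `D♭(L)`. -/
abbrev CX := {φ : PMap (MPHsub L) // φ ∈ MPE (EM L)}

/-- The carrier of the completion built from `D̄♭(L)`. -/
abbrev CY := {φ : PMap (SPHsub L) // φ ∈ MPE (ES L)}

end Lat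

open Classical in
/-- The map `Ψ` sending `φ ∈ MPE(D♭(L),2)` to a partial map on `SPH(L,2_B)`:
`Ψ(φ)(f) = 1` if `(f,g) ∉ E` for every `g ∈ φ⁻¹(0)`; `Ψ(φ)(f) = 0` if every
`h ∈ SPH(L,2_B)` with `(h,g) ∉ E` for all `g ∈ φ⁻¹(0)` satisfies
`(h,f) ∉ E`; undefined otherwise. -/
noncomputable def Psi (L : Type*) [Lattice L] [BoundedOrder L]
    (φ : PMap (MPHsub L)) : PMap (SPHsub L) := fun f =>
  if ∀ g ∈ pre0 φ, ¬ ErelP f.1 g.1 then some true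
  else if ∀ h : SPHsub L, (∀ g ∈ pre0 φ, ¬ ErelP h.1 g.1) → ¬ ErelP h.1 f.1 then some false
  else none

open Function

section PartialMaps

variable {X : Type*}

lemma PMap.ext_pre {φ ψ : PMap X} (h1 : pre1 φ = pre1 ψ) (h0 : pre0 φ = pre0 ψ) :
    φ = ψ := by
  funext x
  have h1x : φ x = some true ↔ ψ x = some true := Set.ext_iff.1 h1 x
  have h0x : φ x = some false ↔ ψ x = some false := Set.ext_iff.1 h0 x
  rcases hφx : φ x with _ | _ | _ <;> rcases hψx : ψ x with _ | _ | _ <;> simp_all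

lemma pext_iff_subset {φ ψ : PMap X} :
    PExt ψ φ ↔ pre1 φ ⊆ pre1 ψ ∧ pre0 φ ⊆ pre0 ψ := by
  refine ⟨fun h => ⟨fun x hx => h hx, fun x hx => h hx⟩, fun ⟨h1, h0⟩ x a hx => ?_⟩
  cases a
  exacts [h0 hx, h1 hx]

lemma disjoint_pre1_pre0 (φ : PMap X) : Disjoint (pre1 φ) (pre0 φ) :=
  Set.disjoint_left.2 fun x (h1 : φ x = _) (h0 : φ x = _) => by simp [h1] at h0

lemma erelP_iff_disjoint {f g : PMap X} : ErelP f g ↔ Disjoint (pre1 f) (pre0 g) := by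
  refine ⟨fun h => Set.disjoint_left.2 fun x h1 h0 => absurd (h h1 h0) (by decide),
    fun h x a b ha hb => ?_⟩
  cases a
  · exact Bool.false_le b
  cases b
  · exact absurd hb (Set.disjoint_left.1 h ha)
  · exact le_rfl

lemma erelP_refl (f : PMap X) : ErelP f f :=
  erelP_iff_disjoint.2 (disjoint_pre1_pre0 f)

open Classical in
noncomputable def pairMap (F I : Set X) : PMap X := fun x =>
  if x ∈ F then some true else if x ∈ I then some false else none

lemma pre1_pairMap {F I : Set X} : pre1 (pairMap F I) = F := by
  ext x
  change (if x ∈ F then _ else _) = _ ↔ _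
  split_ifs <;> simp_all

lemma pre0_pairMap {F I : Set X} (hd : Disjoint F I) : pre0 (pairMap F I) = I := by
  ext x
  change (if x ∈ F then _ else _) = _ ↔ _
  split_ifs with hF hI
  · simpa using Set.disjoint_left.1 hd hF
  · simpa using hI
  · simpa using hI

end PartialMaps

section MaximalPartialMaps

variable {X : Type*} {E : X → X → Prop} {φ ψ : PMap X}

lemma EPres.update {f : X} (hφ : EPres E φ) (b : Bool)
    (hout : ∀ ⦃y c⦄, φ y = some c → E f y → b ≤ c)
    (hin : ∀ ⦃y c⦄, φ y = some c → E y f → c ≤ b) :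
    EPres E (update φ f (some b)) := by
  intro x y hxy a c hx hy
  simp only [update_apply] at hx hy
  split_ifs at hx hy with hxf hyf hyf
  · cases hx; cases hy; exact le_rfl
  · subst hxf; cases hx; exact hout hy hxy
  · subst hyf; cases hy; exact hin hx hxy
  · exact hφ hxy hx hy

lemma not_ePres_update_of_mem_MPE (hφ : φ ∈ MPE E) {f : X} (hf : φ f = none) (b : Bool) :
    ¬ EPres E (update φ f (some b)) := fun h => by
  have hext : PExt (update φ f (some b)) φ := fun x a hx => by
    rwa [update_of_ne (by rintro rfl; simp [hf] at hx)]
  simpa [hf] using congrFun (hφ.2 _ h hext) f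

lemma mem_MPE_iff : φ ∈ MPE E ↔ EPres E φ ∧ ∀ f, φ f = none →
      (∃ g, φ g = some false ∧ E f g) ∧ (∃ g, φ g = some true ∧ E g f) := by
  refine ⟨fun hφ => ⟨hφ.1, fun f hf => ⟨?_, ?_⟩⟩,
    fun ⟨hφ, hdom⟩ => ⟨hφ, fun ψ hψ hext => ?_⟩⟩
  · by_contra! h
    refine not_ePres_update_of_mem_MPE hφ hf true <|
      hφ.1.update true (fun y c hy hfy => ?_) fun _ c _ _ => c.le_true
    cases c
    exacts [absurd hfy (h y hy), le_rfl]
  · by_contra! h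
    refine not_ePres_update_of_mem_MPE hφ hf false <|
      hφ.1.update false (fun _ c _ _ => c.false_le) fun y c hy hyf => ?_
    cases c
    exacts [le_rfl, absurd hyf (h y hy)]
  · funext x
    rcases hx : φ x with _ | a
    · rcases hψx : ψ x with _ | (_ | _)
      · rfl
      · obtain ⟨g, hg, hxg⟩ := (hdom x hx).2
        exact absurd (hψ hxg (hext hg) hψx) (by decide)
      · obtain ⟨g, hg, hxg⟩ := (hdom x hx).1
        exact absurd (hψ hxg hψx (hext hg)) (by decide)
    · exact hext hx

lemma pre0_subset_of_pre1_subset (hφ : φ ∈ MPE E) (hψ : ψ ∈ MPE E)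
    (h : pre1 φ ⊆ pre1 ψ) : pre0 ψ ⊆ pre0 φ := by
  intro g (hg : ψ g = some false)
  rcases hx : φ g with _ | (_ | _)
  · obtain ⟨k, hk, hkg⟩ := ((mem_MPE_iff.1 hφ).2 g hx).2
    exact absurd (hψ.1 hkg (h hk) hg) (by decide)
  · exact hx
  · exact absurd ((h hx : ψ g = some true).symm.trans hg) (by simp)

lemma eq_of_pre1_eq_of_mem_MPE (hφ : φ ∈ MPE E) (hψ : ψ ∈ MPE E) (h : pre1 φ = pre1 ψ) :
    φ = ψ :=
  PMap.ext_pre h <| (pre0_subset_of_pre1_subset hψ hφ h.ge).antisymm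
    (pre0_subset_of_pre1_subset hφ hψ h.le)

end MaximalPartialMaps

section Psi

variable {X Y : Type*} {E : Y → Y → Prop} {ι : X → Y}

open Classical in
/-- The map `Ψ` for an arbitrary graph `(Y, E)` and map `ι : X → Y`, with `X` carrying the
pulled-back relation `E on ι`; `Psi L` is the case `ι = toSPH`. -/
noncomputable def psiMap (E : Y → Y → Prop) (ι : X → Y) (φ : PMap X) : PMap Y := fun f =>
  if ∀ g ∈ pre0 φ, ¬ E f (ι g) then some true
  else if ∀ h, (∀ g ∈ pre0 φ, ¬ E h (ι g)) → ¬ E h f then some false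
  else none

def IsInterpolating (E : Y → Y → Prop) (ι : X → Y) : Prop :=
  ∀ f h, E f h → ∃ g, (∀ k, E k (ι g) → E k h) ∧ (∀ k, E (ι g) k → E f k)

lemma psiMap_eq_true_iff {φ : PMap X} {f : Y} :
    psiMap E ι φ f = some true ↔ ∀ g ∈ pre0 φ, ¬ E f (ι g) := by
  unfold psiMap
  split_ifs <;> simp_all

lemma psiMap_eq_false_iff (hE : ∀ y, E y y) {φ : PMap X} {f : Y} :
    psiMap E ι φ f = some false ↔ ∀ h, (∀ g ∈ pre0 φ, ¬ E h (ι g)) → ¬ E h f := by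
  unfold psiMap
  split_ifs with h1 h2
  · exact iff_of_false (by simp) fun h => h f h1 (hE f)
  · exact iff_of_true rfl h2
  · exact iff_of_false (by simp) h2

lemma psiMap_mem_MPE (hE : ∀ y, E y y) (φ : PMap X) : psiMap E ι φ ∈ MPE E := by
  refine mem_MPE_iff.2 ⟨fun x y hxy a b hx hy => ?_, fun f hf => ⟨?_, ?_⟩⟩
  · cases a
    · exact Bool.false_le b
    cases b
    · exact absurd hxy ((psiMap_eq_false_iff hE).1 hy x (psiMap_eq_true_iff.1 hx))
    · exact le_rfl
  · have : ¬ ∀ g ∈ pre0 φ, ¬ E f (ι g) := fun h => by simp [psiMap_eq_true_iff.2 h] at hf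
    push Not at this
    obtain ⟨g, hg, hfg⟩ := this
    exact ⟨ι g, (psiMap_eq_false_iff hE).2 fun h hh => hh g hg, hfg⟩
  · have : ¬ ∀ h, (∀ g ∈ pre0 φ, ¬ E h (ι g)) → ¬ E h f := fun h => by
      simp [(psiMap_eq_false_iff hE).2 h] at hf
    push Not at this
    obtain ⟨h, hh, hhf⟩ := this
    exact ⟨h, psiMap_eq_true_iff.2 hh, hhf⟩

lemma psiMap_apply_eq_true_iff (hE : ∀ y, E y y) {φ : PMap X} (hφ : φ ∈ MPE (E on ι))
    (g : X) :
    psiMap E ι φ (ι g) = some true ↔ φ g = some true := by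
  rw [psiMap_eq_true_iff]
  refine ⟨fun h => ?_, fun hg g' hg' hgg' => absurd (hφ.1 hgg' hg hg') (by decide)⟩
  rcases hx : φ g with _ | (_ | _)
  · obtain ⟨g', hg', hgg'⟩ := ((mem_MPE_iff.1 hφ).2 g hx).1
    exact absurd hgg' (h g' hg')
  · exact absurd (hE (ι g)) (h g hx)
  · rfl

lemma psiMap_pre1_subset_iff (hE : ∀ y, E y y) {φ ψ : PMap X} (hφ : φ ∈ MPE (E on ι))
    (hψ : ψ ∈ MPE (E on ι)) :
    pre1 φ ⊆ pre1 ψ ↔ pre1 (psiMap E ι φ) ⊆ pre1 (psiMap E ι ψ) := by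
  refine ⟨fun h f hf => ?_, fun h g hg => ?_⟩
  · have h0 := pre0_subset_of_pre1_subset hφ hψ h
    exact psiMap_eq_true_iff.2 fun g hg => psiMap_eq_true_iff.1 hf g (h0 hg)
  · exact (psiMap_apply_eq_true_iff hE hψ g).1 (h ((psiMap_apply_eq_true_iff hE hφ g).2 hg))

lemma psiMap_injOn (hE : ∀ y, E y y) : Set.InjOn (psiMap E ι) (MPE (E on ι)) :=
  fun _ hφ _ hψ h => eq_of_pre1_eq_of_mem_MPE hφ hψ <|
    ((psiMap_pre1_subset_iff hE hφ hψ).2 (h ▸ subset_rfl)).antisymm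
      ((psiMap_pre1_subset_iff hE hψ hφ).2 (h ▸ subset_rfl))

lemma exists_eq_false_of_rel (hE : ∀ y, E y y) (hι : IsInterpolating E ι) {η : PMap Y}
    (hη : η ∈ MPE E) {f h : Y} (hh : η h = some false) (hfh : E f h) :
    ∃ g, E f (ι g) ∧ η (ι g) = some false := by
  obtain ⟨g, hdown, hup⟩ := hι f h hfh
  refine ⟨g, hup _ (hE _), ?_⟩
  rcases hx : η (ι g) with _ | (_ | _)
  · obtain ⟨k, hk, hkg⟩ := ((mem_MPE_iff.1 hη).2 _ hx).2
    exact absurd (hη.1 (hdown k hkg) hk hh) (by decide)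
  · rfl
  · exact absurd (hη.1 (hdown _ (hE _)) hx hh) (by decide)

lemma exists_eq_true_of_rel (hE : ∀ y, E y y) (hι : IsInterpolating E ι) {η : PMap Y}
    (hη : η ∈ MPE E) {f h : Y} (hf : η f = some true) (hfh : E f h) :
    ∃ g, E (ι g) h ∧ η (ι g) = some true := by
  obtain ⟨g, hdown, hup⟩ := hι f h hfh
  refine ⟨g, hdown _ (hE _), ?_⟩
  rcases hx : η (ι g) with _ | (_ | _)
  · obtain ⟨k, hk, hgk⟩ := ((mem_MPE_iff.1 hη).2 _ hx).1
    exact absurd (hη.1 (hup k hgk) hf hk) (by decide)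
  · exact absurd (hη.1 (hup _ (hE _)) hf hx) (by decide)
  · rfl

lemma comp_mem_MPE (hE : ∀ y, E y y) (hι : IsInterpolating E ι) {η : PMap Y}
    (hη : η ∈ MPE E) : η ∘ ι ∈ MPE (E on ι) := by
  refine mem_MPE_iff.2 ⟨fun x y hxy => hη.1 hxy, fun g hg => ⟨?_, ?_⟩⟩
  · obtain ⟨h, hh, hgh⟩ := ((mem_MPE_iff.1 hη).2 (ι g) hg).1
    exact (exists_eq_false_of_rel hE hι hη hh hgh).imp fun _ ⟨h1, h2⟩ => ⟨h2, h1⟩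
  · obtain ⟨k, hk, hkg⟩ := ((mem_MPE_iff.1 hη).2 (ι g) hg).2
    exact (exists_eq_true_of_rel hE hι hη hk hkg).imp fun _ ⟨h1, h2⟩ => ⟨h2, h1⟩

lemma psiMap_comp (hE : ∀ y, E y y) (hι : IsInterpolating E ι) {η : PMap Y}
    (hη : η ∈ MPE E) : psiMap E ι (η ∘ ι) = η := by
  refine eq_of_pre1_eq_of_mem_MPE (psiMap_mem_MPE hE _) hη (Set.ext fun f => ?_)
  refine psiMap_eq_true_iff.trans
    ⟨fun h => ?_, fun hf g hg hfg => absurd (hη.1 hfg hf hg) (by decide)⟩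
  rcases hx : η f with _ | (_ | _)
  · obtain ⟨k, hk, hfk⟩ := ((mem_MPE_iff.1 hη).2 f hx).1
    obtain ⟨g, hfg, hg⟩ := exists_eq_false_of_rel hE hι hη hk hfk
    exact absurd hfg (h g hg)
  · obtain ⟨g, hfg, hg⟩ := exists_eq_false_of_rel hE hι hη hx (hE f)
    exact absurd hfg (h g hg)
  · exact hx

end Psi

section Lattice

variable {L : Type*} [Lattice L]

def IsFilterIdealPair (p : Set L × Set L) : Prop :=
  IsLatFilter L p.1 ∧ IsLatIdeal L p.2 ∧ Disjoint p.1 p.2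

lemma isLatFilter_Ici (a : L) : IsLatFilter L (Set.Ici a) :=
  ⟨⟨a, le_rfl⟩, fun _ _ hx hxy => le_trans hx hxy, fun _ _ => le_inf⟩

lemma isLatIdeal_Iic (a : L) : IsLatIdeal L (Set.Iic a) :=
  ⟨⟨a, le_rfl⟩, fun _ _ hx hyx => le_trans hyx hx, fun _ _ => sup_le⟩

lemma pairMap_mem_SPHset {F I : Set L} (h : IsFilterIdealPair (F, I)) :
    pairMap F I ∈ SPHset L := by
  change IsFilterIdealPair (pre1 _, pre0 _)
  rwa [pre1_pairMap, pre0_pairMap h.2.2]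

lemma isFilterIdealPair_biUnion_of_isChain {c : Set (Set L × Set L)}
    (hc : c ⊆ {p | IsFilterIdealPair p}) (hch : IsChain (· ≤ ·) c) (hne : c.Nonempty) :
    IsFilterIdealPair (⋃ p ∈ c, p.1, ⋃ p ∈ c, p.2) := by
  obtain ⟨p₀, hp₀⟩ := hne
  have hdir := hch.directedOn
  simp only [IsFilterIdealPair, IsLatFilter, IsLatIdeal, Set.disjoint_left, Set.mem_iUnion₂,
    exists_prop]
  refine ⟨⟨?_, ?_, ?_⟩, ⟨?_, ?_, ?_⟩, ?_⟩
  · obtain ⟨a, ha⟩ := (hc hp₀).1.1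
    exact ⟨a, Set.mem_biUnion hp₀ ha⟩
  · rintro a b ⟨p, hp, ha⟩ hab
    exact ⟨p, hp, (hc hp).1.2.1 ha hab⟩
  · rintro a b ⟨p, hp, ha⟩ ⟨q, hq, hb⟩
    obtain ⟨r, hr, hpr, hqr⟩ := hdir p hp q hq
    exact ⟨r, hr, (hc hr).1.2.2 (hpr.1 ha) (hqr.1 hb)⟩
  · obtain ⟨a, ha⟩ := (hc hp₀).2.1.1
    exact ⟨a, Set.mem_biUnion hp₀ ha⟩
  · rintro a b ⟨p, hp, ha⟩ hba
    exact ⟨p, hp, (hc hp).2.1.2.1 ha hba⟩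
  · rintro a b ⟨p, hp, ha⟩ ⟨q, hq, hb⟩
    obtain ⟨r, hr, hpr, hqr⟩ := hdir p hp q hq
    exact ⟨r, hr, (hc hr).2.1.2.2 (hpr.2 ha) (hqr.2 hb)⟩
  · rintro a ⟨p, hp, ha⟩ ⟨q, hq, hb⟩
    obtain ⟨r, hr, hpr, hqr⟩ := hdir p hp q hq
    exact Set.disjoint_left.1 (hc hr).2.2 (hpr.1 ha) (hqr.2 hb)

lemma ES_refl (f : SPHsub L) : ES L f f := erelP_refl f.1

variable [BoundedOrder L]

lemma PHom_of_mem_SPHset {f : PMap L} (hf : f ∈ SPHset L) : PHom L f := by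
  obtain ⟨⟨⟨c, hc⟩, hup, hinf⟩, ⟨⟨d, hd⟩, hdown, hsup⟩, -⟩ := hf
  refine ⟨hdown hd bot_le, hup hc le_top, fun a b x y ha hb => ?_⟩
  cases x <;> cases y
  · exact ⟨hdown ha inf_le_left, hsup ha hb⟩
  · exact ⟨hdown ha inf_le_left, hup hb le_sup_right⟩
  · exact ⟨hdown hb inf_le_right, hup ha le_sup_left⟩
  · exact ⟨hinf ha hb, hup ha le_sup_left⟩

lemma PHom.isFilterIdealPair_closure {g : PMap L} (hg : PHom L g) :
    IsFilterIdealPair ((upperClosure (pre1 g) : Set L), (lowerClosure (pre0 g) : Set L)) := by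
  refine ⟨⟨⟨⊤, subset_upperClosure hg.2.1⟩, fun _ _ ha h => (upperClosure _).upper h ha, ?_⟩,
    ⟨⟨⊥, subset_lowerClosure hg.1⟩, fun _ _ ha h => (lowerClosure _).lower h ha, ?_⟩, ?_⟩
  · rintro a b ⟨c, hc, hca⟩ ⟨d, hd, hdb⟩
    exact ⟨c ⊓ d, (hg.2.2 hc hd).1, inf_le_inf hca hdb⟩
  · rintro a b ⟨c, hc, hac⟩ ⟨d, hd, hbd⟩
    exact ⟨c ⊔ d, (hg.2.2 hc hd).2, sup_le_sup hac hbd⟩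
  · refine Set.disjoint_left.2 ?_
    rintro x ⟨c, hc, hcx⟩ ⟨d, hd, hxd⟩
    -- `c ≤ d` would give `1 = g (c ⊔ d) = g d = 0`
    have hcd := (hg.2.2 hc hd).2
    rw [sup_eq_right.2 (hcx.trans hxd), hd] at hcd
    simp at hcd

lemma PHom.pext_pairMap_closure {g : PMap L} (hg : PHom L g) :
    PExt (pairMap (upperClosure (pre1 g) : Set L) (lowerClosure (pre0 g))) g := by
  rw [pext_iff_subset, pre1_pairMap, pre0_pairMap hg.isFilterIdealPair_closure.2.2]
  exact ⟨subset_upperClosure, subset_lowerClosure⟩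

lemma mem_SPHset_of_mem_MPHset {g : PMap L} (hg : g ∈ MPHset L) : g ∈ SPHset L := by
  have hp := hg.1.isFilterIdealPair_closure
  rw [← hg.2 _ (PHom_of_mem_SPHset (pairMap_mem_SPHset hp)) hg.1.pext_pairMap_closure]
  exact pairMap_mem_SPHset hp

lemma pairMap_mem_MPHset_of_maximal {m : Set L × Set L} (hm : Maximal IsFilterIdealPair m) :
    pairMap m.1 m.2 ∈ MPHset L := by
  have hd := hm.1.2.2
  refine ⟨PHom_of_mem_SPHset (pairMap_mem_SPHset hm.1), fun g hg hext => ?_⟩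
  rw [pext_iff_subset, pre1_pairMap, pre0_pairMap hd] at hext
  have hle := hm.2 hg.isFilterIdealPair_closure
    ⟨hext.1.trans subset_upperClosure, hext.2.trans subset_lowerClosure⟩
  refine PMap.ext_pre ?_ ?_
  · rw [pre1_pairMap]
    exact (subset_upperClosure.trans hle.1).antisymm hext.1
  · rw [pre0_pairMap hd]
    exact (subset_lowerClosure.trans hle.2).antisymm hext.2

lemma exists_MPH_of_isFilterIdealPair {F I : Set L} (h : IsFilterIdealPair (F, I)) :
    ∃ g ∈ MPHset L, F ⊆ pre1 g ∧ I ⊆ pre0 g := by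
  obtain ⟨m, hFIm, hm⟩ := zorn_le_nonempty₀ {p | IsFilterIdealPair p}
    (fun c hc hch p hp => ⟨_, isFilterIdealPair_biUnion_of_isChain hc hch ⟨p, hp⟩, fun q hq =>
      ⟨Set.subset_biUnion_of_mem hq, Set.subset_biUnion_of_mem (u := Prod.snd) hq⟩⟩)
    (F, I) h
  refine ⟨_, pairMap_mem_MPHset_of_maximal hm, ?_, ?_⟩
  · rw [pre1_pairMap]
    exact hFIm.1
  · rw [pre0_pairMap hm.1.2.2]
    exact hFIm.2

def toSPH (g : MPHsub L) : SPHsub L := ⟨g.1, mem_SPHset_of_mem_MPHset g.2⟩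

lemma isInterpolating_toSPH : IsInterpolating (ES L) (toSPH (L := L)) := fun f h hfh => by
  obtain ⟨g, hg, hf, hh⟩ :=
    exists_MPH_of_isFilterIdealPair ⟨f.2.1, h.2.2.1, erelP_iff_disjoint.1 hfh⟩
  exact ⟨⟨g, hg⟩, fun k hk => erelP_iff_disjoint.2 ((erelP_iff_disjoint.1 hk).mono_right hh),
    fun k hk => erelP_iff_disjoint.2 ((erelP_iff_disjoint.1 hk).mono_left hf)⟩

lemma exists_MPH_eq_false_of_ne_true {f : SPHsub L} {a : L} (ha : f.1 a ≠ some true) :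
    ∃ g ∈ MPHset L, g a = some false ∧ ErelP f.1 g := by
  have hd : Disjoint (pre1 f.1) (Set.Iic a) :=
    Set.disjoint_left.2 fun x hx hxa => ha (f.2.1.2.1 hx hxa)
  obtain ⟨g, hg, hf, ha⟩ := exists_MPH_of_isFilterIdealPair ⟨f.2.1, isLatIdeal_Iic a, hd⟩
  exact ⟨g, hg, ha le_rfl, erelP_iff_disjoint.2 ((disjoint_pre1_pre0 g).mono_left hf)⟩

lemma evalS_mem_MPE (a : L) : evalS L a ∈ MPE (ES L) := by
  refine mem_MPE_iff.2
    ⟨fun _ _ hfg _ _ hf hg => hfg hf hg, fun f (hf : f.1 a = none) => ⟨?_, ?_⟩⟩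
  · obtain ⟨g, hg, hga, hfg⟩ := exists_MPH_eq_false_of_ne_true (f := f) (a := a) (by simp [hf])
    exact ⟨toSPH ⟨g, hg⟩, hga, hfg⟩
  · have hd : Disjoint (Set.Ici a) (pre0 f.1) := Set.disjoint_left.2 fun x hax hx => by
      simpa [hf, pre0] using f.2.2.1.2.1 hx hax
    exact ⟨⟨_, pairMap_mem_SPHset ⟨isLatFilter_Ici a, f.2.2.1, hd⟩⟩, if_pos (le_refl a),
      erelP_iff_disjoint.2 (pre1_pairMap ▸ hd)⟩

lemma psiMap_evalM (a : L) : psiMap (ES L) toSPH (evalM L a) = evalS L a := by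
  refine eq_of_pre1_eq_of_mem_MPE (psiMap_mem_MPE ES_refl _) (evalS_mem_MPE a) (Set.ext fun f => ?_)
  refine psiMap_eq_true_iff.trans
    ⟨fun h => ?_, fun (ha : f.1 a = _) g (hg : g.1 a = _) hfg => absurd (hfg ha hg) (by decide)⟩
  by_contra ha
  obtain ⟨g, hg, hga, hfg⟩ := exists_MPH_eq_false_of_ne_true ha
  exact h ⟨g, hg⟩ hga hfg

end Lattice

/-- Let `L` be a bounded lattice, `X = D♭(L)` and
`Y = D̄♭(L)`. For every `φ ∈ MPE(X,2)` the partial map `Ψ(φ)` belongs to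
`MPE(Y,2)`, and `Ψ : MPE(X,2) → MPE(Y,2)` is an order-isomorphism for the
orders `φ ≤ ψ ↔ φ⁻¹(1) ⊆ ψ⁻¹(1)`; moreover `Ψ(e_a) = ē_a` for all `a ∈ L`. -/
theorem stmt_16 (L : Type*) [Lattice L] [BoundedOrder L] :
    (∀ φ ∈ MPE (EM L), Psi L φ ∈ MPE (ES L)) ∧
    (∀ φ ∈ MPE (EM L), ∀ ψ ∈ MPE (EM L),
      (pre1 φ ⊆ pre1 ψ ↔ pre1 (Psi L φ) ⊆ pre1 (Psi L ψ))) ∧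
    Set.InjOn (Psi L) (MPE (EM L)) ∧
    (∀ η ∈ MPE (ES L), ∃ φ ∈ MPE (EM L), Psi L φ = η) ∧
    (∀ a : L, Psi L (evalM L a) = evalS L a) := by
  have hΨ : Psi L = psiMap (ES L) toSPH := rfl
  have hX : EM L = (ES L on toSPH) := rfl
  rw [hΨ, hX]
  exact ⟨fun φ _ => psiMap_mem_MPE ES_refl φ,
    fun φ hφ ψ hψ => psiMap_pre1_subset_iff ES_refl hφ hψ,
    psiMap_injOn ES_refl,
    fun η hη => ⟨η ∘ toSPH, comp_mem_MPE ES_refl isInterpolating_toSPH hη,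
      psiMap_comp ES_refl isInterpolating_toSPH hη⟩,
    psiMap_evalM⟩

end CanExt
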